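/- arXiv:2302.03420 — 3 statements merged into one kernel-verified Lean document; each statement's English description precedes it below -/
import Mathlib

section
/- For z₁, z₂ > 0 and integer n ≥ 2, ∫_0^∞ (log v) e^{-v} v^{2n-3}(1-e^{-vz₁})(1-e^{-vz₂}) dv = Γ(2n-2)·[ψ(2n-2)·(1-(1+z₁)^{2-2n}-(1+z₂)^{2-2n}+(1+z₁+z₂)^{2-2n}) + (1+z₁)^{2-2n}log(1+z₁) + (1+z₂)^{2-2n}log(1+z₂) - (1+z₁+z₂)^{2-2n}log(1+z₁+z₂)]. -/
/-!
Expanding the two factors `1 - e^{-vz}` writes the integrand as a signed sum of four terms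
`log v · e^{-cv} v^{m-1}` with `m = 2n - 2` and `c ∈ {1, 1 + z₁, 1 + z₂, 1 + z₁ + z₂}`.
For `c = 1` the integral is `Γ'(m) = Γ(m) ψ(m)`, obtained by differentiating the Mellin transform
of `e^{-t}` under the integral sign. The substitution `u = cv` together with
`log (cv) = log c + log v` reduces a general `c > 0` to that case and gives
`c^{-m} Γ(m) (ψ(m) - log c)`.
-/

open MeasureTheory Real Set

/-- The digamma function ψ = Γ'/Γ as the derivative of log ∘ Γ. -/
noncomputable def digamma (x : ℝ) : ℝ := deriv (fun y => Real.log (Real.Gamma y)) x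

open Filter Asymptotics

lemma mellin_exp_neg_hasDerivAt {s : ℂ} (hs : 0 < s.re) :
    MellinConvergent (fun t : ℝ => Real.log t • (Real.exp (-t) : ℂ)) s ∧
      HasDerivAt (mellin fun t : ℝ => (Real.exp (-t) : ℂ))
        (mellin (fun t : ℝ => Real.log t • (Real.exp (-t) : ℂ)) s) s := by
  refine mellin_hasDerivAt_of_isBigO_rpow (E := ℂ) ?_ ?_ (lt_add_one _) ?_ hs
  · refine (Continuous.continuousOn ?_).locallyIntegrableOn measurableSet_Ioi
    fun_prop
  · rw [← isBigO_norm_left]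
    simp_rw [Complex.norm_real, isBigO_norm_left]
    simpa only [neg_one_mul] using (isLittleO_exp_neg_mul_rpow_atTop zero_lt_one _).isBigO
  · simp_rw [neg_zero, Real.rpow_zero]
    refine isBigO_const_of_tendsto (?_ : Tendsto _ _ (nhds (1 : ℂ))) one_ne_zero
    rw [(by simp : (1 : ℂ) = Real.exp (-0))]
    exact (Continuous.continuousWithinAt (by fun_prop))

lemma cpow_smul_log_smul_exp_neg {m t : ℝ} (ht : 0 < t) :
    (t : ℂ) ^ ((m : ℂ) - 1) • (Real.log t • (Real.exp (-t) : ℂ))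
      = ((Real.log t * (Real.exp (-t) * t ^ (m - 1)) : ℝ) : ℂ) := by
  rw [show (m : ℂ) - 1 = ((m - 1 : ℝ) : ℂ) by push_cast; ring, ← Complex.ofReal_cpow ht.le,
    smul_eq_mul, Complex.real_smul]
  push_cast
  ring

lemma integrableOn_log_mul_exp_neg_mul_rpow {m : ℝ} (hm : 0 < m) :
    IntegrableOn (fun t : ℝ => Real.log t * (Real.exp (-t) * t ^ (m - 1))) (Ioi 0) := by
  have h : MellinConvergent (fun t : ℝ => Real.log t • (Real.exp (-t) : ℂ)) m :=
    (mellin_exp_neg_hasDerivAt (by simpa using hm)).1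
  simpa only [IntegrableOn, Complex.ofReal_re, RCLike.re_to_complex] using
    (h.congr_fun (fun t ht => cpow_smul_log_smul_exp_neg ht) measurableSet_Ioi).re

lemma hasDerivAt_Gamma_of_pos {m : ℝ} (hm : 0 < m) :
    HasDerivAt Gamma (∫ t in Ioi 0, Real.log t * (Real.exp (-t) * t ^ (m - 1))) m := by
  have hs : 0 < (m : ℂ).re := by simpa using hm
  have hGamma : Complex.Gamma =ᶠ[nhds (m : ℂ)] mellin fun t : ℝ => (Real.exp (-t) : ℂ) := by
    filter_upwards [(isOpen_lt continuous_const Complex.continuous_re).mem_nhds hs] with z hz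
    rw [Complex.Gamma_eq_integral hz, Complex.GammaIntegral_eq_mellin]
  have hval : mellin (fun t : ℝ => Real.log t • (Real.exp (-t) : ℂ)) m
      = ((∫ t in Ioi 0, Real.log t * (Real.exp (-t) * t ^ (m - 1)) : ℝ) : ℂ) :=
    (setIntegral_congr_fun measurableSet_Ioi fun t ht => cpow_smul_log_smul_exp_neg ht).trans
      integral_ofReal
  have h := (mellin_exp_neg_hasDerivAt hs).2.congr_of_eventuallyEq hGamma
  rw [hval] at h
  exact h.real_of_complex

lemma integral_log_mul_exp_neg_mul_rpow {m : ℝ} (hm : 0 < m) :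
    ∫ t in Ioi 0, Real.log t * (Real.exp (-t) * t ^ (m - 1)) = Gamma m * digamma m := by
  have h := (hasDerivAt_Gamma_of_pos hm).log (Gamma_pos_of_pos hm).ne'
  rw [digamma, h.deriv]
  field_simp [(Gamma_pos_of_pos hm).ne']

lemma integrableOn_Ioi_zero_comp_mul_left {E : Type*} [NormedAddCommGroup E] {f : ℝ → E} {c : ℝ}
    (hf : IntegrableOn f (Ioi 0)) (hc : 0 < c) : IntegrableOn (fun v => f (c * v)) (Ioi 0) :=
  (integrableOn_Ioi_comp_mul_left_iff f 0 hc).mpr (by simpa using hf)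

lemma log_mul_exp_neg_mul_rpow_eq {m c v : ℝ} (hc : 0 < c) (hv : 0 < v) :
    Real.log v * (Real.exp (-(c * v)) * v ^ (m - 1))
      = c ^ (1 - m) * (Real.log (c * v) * (Real.exp (-(c * v)) * (c * v) ^ (m - 1))
          - Real.log c * (Real.exp (-(c * v)) * (c * v) ^ (m - 1))) := by
  have h : c ^ (1 - m) * c ^ (m - 1) = 1 := by rw [← Real.rpow_add hc]; simp
  rw [Real.mul_rpow hc.le hv.le, Real.log_mul hc.ne' hv.ne']
  linear_combination (-(Real.log v * (Real.exp (-(c * v)) * v ^ (m - 1)))) * h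

lemma integrableOn_log_mul_exp_neg_mul_mul_rpow {m c : ℝ} (hm : 0 < m) (hc : 0 < c) :
    IntegrableOn (fun v : ℝ => Real.log v * (Real.exp (-(c * v)) * v ^ (m - 1))) (Ioi 0) := by
  refine IntegrableOn.congr_fun ?_ (fun v hv => (log_mul_exp_neg_mul_rpow_eq hc hv).symm)
    measurableSet_Ioi
  exact (((integrableOn_Ioi_zero_comp_mul_left (integrableOn_log_mul_exp_neg_mul_rpow hm) hc).sub
    ((integrableOn_Ioi_zero_comp_mul_left (GammaIntegral_convergent hm) hc).const_mul
      (Real.log c))).const_mul (c ^ (1 - m)))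

lemma integral_log_mul_exp_neg_mul_mul_rpow {m c : ℝ} (hm : 0 < m) (hc : 0 < c) :
    ∫ v in Ioi 0, Real.log v * (Real.exp (-(c * v)) * v ^ (m - 1))
      = c ^ (-m) * (Gamma m * (digamma m - Real.log c)) := by
  have hscale (f : ℝ → ℝ) : ∫ v in Ioi 0, f (c * v) = c⁻¹ * ∫ u in Ioi 0, f u := by
    simpa using integral_comp_mul_left_Ioi f 0 hc
  rw [setIntegral_congr_fun measurableSet_Ioi fun v hv => log_mul_exp_neg_mul_rpow_eq hc hv,
    integral_const_mul, integral_sub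
      (integrableOn_Ioi_zero_comp_mul_left (integrableOn_log_mul_exp_neg_mul_rpow hm) hc)
      ((integrableOn_Ioi_zero_comp_mul_left (GammaIntegral_convergent hm) hc).const_mul _),
    integral_const_mul, hscale (fun u => Real.log u * (Real.exp (-u) * u ^ (m - 1))),
    hscale (fun u => Real.exp (-u) * u ^ (m - 1)), integral_log_mul_exp_neg_mul_rpow hm,
    ← Gamma_eq_integral hm]
  have h : c ^ (1 - m) * c⁻¹ = c ^ (-m) := by
    rw [← Real.rpow_neg_one, ← Real.rpow_add hc]; ring_nf
  linear_combination Gamma m * (digamma m - Real.log c) * h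

/-- Explicit value of ∫₀^∞ (log v) e^{-v} v^{2n-3}(1-e^{-vz₁})(1-e^{-vz₂}) dv. -/
theorem stmt_13 (z₁ z₂ : ℝ) (hz₁ : 0 < z₁) (hz₂ : 0 < z₂) (n : ℕ) (hn : 2 ≤ n) :
    ∫ v in Ioi (0:ℝ),
        Real.log v * (Real.exp (-v) * v ^ ((2:ℝ) * n - 3)
          * (1 - Real.exp (-(v * z₁))) * (1 - Real.exp (-(v * z₂))))
      = Real.Gamma ((2:ℝ) * n - 2) *
          (digamma ((2:ℝ) * n - 2) *
              (1 - (1 + z₁) ^ ((2:ℝ) - 2 * n) - (1 + z₂) ^ ((2:ℝ) - 2 * n)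
                + (1 + z₁ + z₂) ^ ((2:ℝ) - 2 * n))
            + (1 + z₁) ^ ((2:ℝ) - 2 * n) * Real.log (1 + z₁)
            + (1 + z₂) ^ ((2:ℝ) - 2 * n) * Real.log (1 + z₂)
            - (1 + z₁ + z₂) ^ ((2:ℝ) - 2 * n) * Real.log (1 + z₁ + z₂)) := by
  set m : ℝ := 2 * n - 2 with hm_def
  have hm : 0 < m := by
    have : (2 : ℝ) ≤ n := by exact_mod_cast hn
    linarith
  set F : ℝ → ℝ → ℝ := fun c v => Real.log v * (Real.exp (-(c * v)) * v ^ (m - 1)) with hF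
  have hint (c : ℝ) (hc : 0 < c) : IntegrableOn (F c) (Ioi 0) :=
    integrableOn_log_mul_exp_neg_mul_mul_rpow hm hc
  have hexpand : (fun v : ℝ => Real.log v * (Real.exp (-v) * v ^ ((2:ℝ) * n - 3)
      * (1 - Real.exp (-(v * z₁))) * (1 - Real.exp (-(v * z₂)))))
      = F 1 - F (1 + z₁) - F (1 + z₂) + F (1 + z₁ + z₂) := by
    ext v
    simp only [hF, Pi.add_apply, Pi.sub_apply, add_mul, one_mul, neg_add, Real.exp_add]
    rw [show (2:ℝ) * n - 3 = m - 1 by rw [hm_def]; ring]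
    ring_nf
  have h₁ : 0 < 1 + z₁ := by linarith
  have h₂ : 0 < 1 + z₂ := by linarith
  have h₁₂ : 0 < 1 + z₁ + z₂ := by linarith
  rw [hexpand, integral_add' (((hint 1 one_pos).sub (hint _ h₁)).sub (hint _ h₂)) (hint _ h₁₂),
    integral_sub' ((hint 1 one_pos).sub (hint _ h₁)) (hint _ h₂),
    integral_sub' (hint 1 one_pos) (hint _ h₁)]
  simp only [hF, integral_log_mul_exp_neg_mul_mul_rpow hm one_pos,
    integral_log_mul_exp_neg_mul_mul_rpow hm h₁, integral_log_mul_exp_neg_mul_mul_rpow hm h₂,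
    integral_log_mul_exp_neg_mul_mul_rpow hm h₁₂, Real.one_rpow, Real.log_one,
    show (2 : ℝ) - 2 * n = -m by rw [hm_def]; ring]
  ring
end

section
/- For 0 < d₁ < d₂ and parameters N > 0, r > 0, the ratio y ↦ [e^{(y-d₂)N} exp(-e^{y-d₂})(1 - e^{-r e^{y-d₂}})] / [e^{(y-d₁)N} exp(-e^{y-d₁})(1 - e^{-r e^{y-d₁}})] is strictly increasing in y on ℝ. -/
/-!
Put `s = e^{d₁-d₂} ∈ (0,1)`, `u = e^{y-d₁}` and `a = e^{-ru} ∈ (0,1)`. Then `e^{y-d₂} = s u` and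
`e^{-rsu} = a^s`, so the ratio equals `e^{(d₁-d₂)N} · e^{(1-s)u} · (1 - a^s)/(1 - a)`. The middle
factor is strictly increasing in `y`, and the last one is a secant slope of the concave function
`x ↦ x^s` through `1`, hence decreasing in `a` and so increasing in `y`.
-/

open Real Set

lemma antitoneOn_one_sub_rpow_div_one_sub {s : ℝ} (hs₀ : 0 ≤ s) (hs₁ : s ≤ 1) :
    AntitoneOn (fun a : ℝ => (1 - a ^ s) / (1 - a)) (Ici 0 \ {1}) := by
  have hslope : ∀ x : ℝ, (-x ^ s - -1) / (x - 1) = -((1 - x ^ s) / (1 - x)) := fun x => by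
    rw [← div_neg, neg_sub]; ring
  intro a ha b hb hab
  have h := (concaveOn_rpow hs₀ hs₁).neg.secant_mono (a := 1) (by simp) ha.1 hb.1 ha.2 hb.2 hab
  simp only [Pi.neg_apply, one_rpow, hslope] at h
  exact neg_le_neg_iff.1 h

lemma one_sub_rpow_div_one_sub_pos {s a : ℝ} (hs : 0 < s) (ha₀ : 0 ≤ a) (ha₁ : a < 1) :
    0 < (1 - a ^ s) / (1 - a) :=
  div_pos (sub_pos.2 (rpow_lt_one ha₀ ha₁ hs)) (sub_pos.2 ha₁)

lemma shifted_ratio_eq (N r d₁ d₂ y : ℝ) :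
    (exp ((y - d₂) * N) * exp (-exp (y - d₂)) * (1 - exp (-(r * exp (y - d₂))))) /
        (exp ((y - d₁) * N) * exp (-exp (y - d₁)) * (1 - exp (-(r * exp (y - d₁)))))
      = exp ((d₁ - d₂) * N) * (exp ((1 - exp (d₁ - d₂)) * exp (y - d₁)) *
          ((1 - exp (-(r * exp (y - d₁))) ^ exp (d₁ - d₂)) /
            (1 - exp (-(r * exp (y - d₁)))))) := by
  have hu : exp (y - d₂) = exp (d₁ - d₂) * exp (y - d₁) := by rw [← exp_add]; ring_nf
  have hN : exp ((y - d₂) * N) = exp ((d₁ - d₂) * N) * exp ((y - d₁) * N) := by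
    rw [← exp_add]; ring_nf
  have hE : exp (-exp (y - d₂))
      = exp ((1 - exp (d₁ - d₂)) * exp (y - d₁)) * exp (-exp (y - d₁)) := by
    rw [← exp_add, hu]; ring_nf
  have hR : exp (-(r * exp (y - d₂))) = exp (-(r * exp (y - d₁))) ^ exp (d₁ - d₂) := by
    rw [← exp_mul, hu]; ring_nf
  rw [hN, hE, hR]
  field_simp

theorem stmt_15_general (N r d₁ d₂ : ℝ) (hr : 0 < r) (hd : d₁ < d₂) :
    StrictMono (fun y : ℝ =>
      (Real.exp ((y - d₂) * N) * Real.exp (-Real.exp (y - d₂))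
          * (1 - Real.exp (-(r * Real.exp (y - d₂))))) /
        (Real.exp ((y - d₁) * N) * Real.exp (-Real.exp (y - d₁))
          * (1 - Real.exp (-(r * Real.exp (y - d₁)))))) := by
  simp only [shifted_ratio_eq]
  set s := exp (d₁ - d₂)
  have hs₁ : s < 1 := exp_lt_one_iff.2 (sub_neg.2 hd)
  have hs : 0 < 1 - s := sub_pos.2 hs₁
  have ha : ∀ y, exp (-(r * exp (y - d₁))) ∈ Ioo 0 1 := fun y =>
    ⟨exp_pos _, exp_lt_one_iff.2 (neg_neg_of_pos (by positivity))⟩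
  refine StrictMono.const_mul (StrictMono.mul_monotone ?_ ?_ (fun _ => (exp_pos _).le)
    (fun y => one_sub_rpow_div_one_sub_pos (exp_pos _) (ha y).1.le (ha y).2)) (exp_pos _)
  · intro x y hxy
    dsimp only
    gcongr
  · intro x y hxy
    refine antitoneOn_one_sub_rpow_div_one_sub (exp_pos _).le hs₁.le
      ⟨(ha y).1.le, (ha y).2.ne⟩ ⟨(ha x).1.le, (ha x).2.ne⟩ ?_
    gcongr

/-- For 0 < d₁ < d₂, N > 0, r > 0, the ratio
y ↦ Λ(y-d₂)/Λ(y-d₁) with Λ(t) = e^{tN} exp(-e^t)(1-e^{-r e^t})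
is strictly increasing in y. -/
theorem stmt_15 (N r d₁ d₂ : ℝ) (hN : 0 < N) (hr : 0 < r) (hd₁ : 0 < d₁) (hd : d₁ < d₂) :
    StrictMono (fun y : ℝ =>
      (Real.exp ((y - d₂) * N) * Real.exp (-Real.exp (y - d₂))
          * (1 - Real.exp (-(r * Real.exp (y - d₂))))) /
        (Real.exp ((y - d₁) * N) * Real.exp (-Real.exp (y - d₁))
          * (1 - Real.exp (-(r * Real.exp (y - d₁)))))) :=
  stmt_15_general N r d₁ d₂ hr hd
end

section
/- For fixed 0 < s < 1 and r > 0, the function v ↦ (1 - e^{-r s v})/(1 - e^{-r v}) is nondecreasing in v on (0, ∞). -/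
/-!
Substitute `x = e^{-rv}`, so that `e^{-rsv} = x^s`. The ratio becomes `(1 - x^s) / (1 - x)`,
the slope of the chord of the concave function `x ↦ x^s` between `x` and `1`, which decreases
as `x` grows; and `x` decreases as `v` grows.
-/

open Real Set

lemma antitoneOn_one_sub_rpow_div_one_sub_s16 {p : ℝ} (hp₀ : 0 ≤ p) (hp₁ : p ≤ 1) :
    AntitoneOn (fun x : ℝ => (1 - x ^ p) / (1 - x)) (Ici 0 \ {1}) := by
  intro x hx y hy hxy
  have h := (concaveOn_rpow hp₀ hp₁).neg.secant_mono (a := 1) (by simp) hx.1 hy.1 hx.2 hy.2 hxy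
  have hslope : ∀ z : ℝ, (-z ^ p - -(1 : ℝ) ^ p) / (z - 1) = -((1 - z ^ p) / (1 - z)) := by
    intro z
    rw [one_rpow, ← neg_div, ← neg_div_neg_eq, neg_sub]
    ring
  simp only [Pi.neg_apply, hslope] at h
  exact neg_le_neg_iff.mp h

/-- For 0 < s < 1 and r > 0, v ↦ (1-e^{-rsv})/(1-e^{-rv}) is nondecreasing on (0,∞). -/
theorem stmt_16 (s r : ℝ) (hs0 : 0 < s) (hs1 : s < 1) (hr : 0 < r) :
    MonotoneOn (fun v : ℝ =>
      (1 - Real.exp (-(r * s * v))) / (1 - Real.exp (-(r * v)))) (Ioi (0:ℝ)) := by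
  have hpow : ∀ v, exp (-(r * s * v)) = exp (-(r * v)) ^ s := by
    intro v
    rw [← exp_mul]
    ring_nf
  have hmaps : MapsTo (fun v => exp (-(r * v))) (Ioi 0) (Ici 0 \ {1}) := by
    intro v hv
    refine ⟨(exp_pos _).le, ?_⟩
    simp only [mem_singleton_iff, exp_eq_one_iff, neg_eq_zero]
    exact (mul_pos hr hv).ne'
  have hdecr : AntitoneOn (fun v => exp (-(r * v))) (Ioi 0) := fun v _ w _ hvw =>
    exp_le_exp.mpr (neg_le_neg (mul_le_mul_of_nonneg_left hvw hr.le))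
  simp only [hpow]
  exact (antitoneOn_one_sub_rpow_div_one_sub_s16 hs0.le hs1.le).comp hdecr hmaps
end
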